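/- arXiv:2110.09344 — 7 statements merged into one kernel-verified Lean document; each statement's English description precedes it below -/
import Mathlib

section
/- Let n be a natural number, let λ ∈ (0,1) with λ ≠ 1/2, let e_A and e_B be binary n×n matrices with e_A ≠ e_B, and set ẽ = λ·e_A + (1−λ)·e_B (entrywise). Then for every real scalar s and all binary n×n matrices e, e', the equation s·e + (1−s)·e' = ẽ holds if and only if either (s = λ, e = e_A, e' = e_B) or (s = 1−λ, e = e_B, e' = e_A). In particular, the equation has exactly two solutions (s, e, e'). -/
/-- A binary matrix: every entry is 0 or 1. -/
def IsBinary {n : ℕ} (e : Matrix (Fin n) (Fin n) ℝ) : Prop :=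
  ∀ i j, e i j = 0 ∨ e i j = 1

lemma entry_lemma {lam : ℝ} (h0 : 0 < lam) (h1 : lam < 1) (hhalf : lam ≠ 1 / 2)
    {x y a b : ℝ} (hx : x = 0 ∨ x = 1) (hy : y = 0 ∨ y = 1)
    (ha : a = 0 ∨ a = 1) (hb : b = 0 ∨ b = 1)
    (heq : lam * x + (1 - lam) * y = lam * a + (1 - lam) * b) : x = a ∧ y = b := by
  rcases hx with hx|hx <;> rcases hy with hy|hy <;> rcases ha with ha|ha <;>
    rcases hb with hb|hb <;> subst_vars <;>
    constructor <;>
    first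
      | rfl
      | (exfalso; first | linarith | (apply hhalf; linarith))

/-- Lemma 1 (Edge Invertibility): for λ ∈ (0,1), λ ≠ 1/2, and binary matrices
`eA ≠ eB`, the equation `s • e + (1-s) • e' = λ • eA + (1-λ) • eB` with `e, e'`
binary holds iff `(s, e, e') = (λ, eA, eB)` or `(s, e, e') = (1-λ, eB, eA)`. -/
theorem stmt_0 {n : ℕ} {lam : ℝ} (h0 : 0 < lam) (h1 : lam < 1) (hhalf : lam ≠ 1 / 2)
    (eA eB : Matrix (Fin n) (Fin n) ℝ) (hA : IsBinary eA) (hB : IsBinary eB)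
    (hne : eA ≠ eB) :
    ∀ (s : ℝ) (e e' : Matrix (Fin n) (Fin n) ℝ), IsBinary e → IsBinary e' →
      (s • e + (1 - s) • e' = lam • eA + (1 - lam) • eB ↔
        (s = lam ∧ e = eA ∧ e' = eB) ∨ (s = 1 - lam ∧ e = eB ∧ e' = eA)) := by
  intro s e e' he he'
  constructor
  · intro heq
    have hpt : ∀ i j, s * e i j + (1 - s) * e' i j
        = lam * eA i j + (1 - lam) * eB i j := by
      intro i j
      have := congrFun (congrFun heq i) j
      simpa [Matrix.add_apply, Matrix.smul_apply, smul_eq_mul] using this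
    -- find a witness entry where eA ≠ eB
    have hwit : ∃ i j, eA i j ≠ eB i j := by
      by_contra hc
      push_neg at hc
      exact hne (by ext i j; exact hc i j)
    obtain ⟨i, j, hij⟩ := hwit
    -- determine s at the witness entry
    have hs : s = lam ∨ s = 1 - lam := by
      have h := hpt i j
      rcases hA i j with ha|ha <;> rcases hB i j with hb|hb <;>
        rcases he i j with hx|hx <;> rcases he' i j with hy|hy <;>
        simp only [ha, hb, hx, hy] at h hij <;>
        first
          | (exact absurd rfl hij)
          | (left; linarith)
          | (right; linarith)
          | (exfalso; linarith)
    rcases hs with hs|hs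
    · left
      refine ⟨hs, ?_, ?_⟩ <;> ext i j
      · exact (entry_lemma h0 h1 hhalf (he i j) (he' i j) (hA i j) (hB i j)
          (by have := hpt i j; rw [hs] at this; linarith)).1
      · exact (entry_lemma h0 h1 hhalf (he i j) (he' i j) (hA i j) (hB i j)
          (by have := hpt i j; rw [hs] at this; linarith)).2
    · right
      refine ⟨hs, ?_, ?_⟩ <;> ext i j
      · exact (entry_lemma h0 h1 hhalf (he' i j) (he i j) (hA i j) (hB i j)
          (by have := hpt i j; rw [hs] at this; linarith)).2
      · exact (entry_lemma h0 h1 hhalf (he' i j) (he i j) (hA i j) (hB i j)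
          (by have := hpt i j; rw [hs] at this; linarith)).1
  · rintro (⟨hs, h1', h2'⟩ | ⟨hs, h1', h2'⟩) <;> subst_vars
    · rfl
    · ext i j
      simp [Matrix.add_apply, Matrix.smul_apply, smul_eq_mul]
      ring
end

section
/- Let λ ∈ (0,1) with λ ≠ 1/2, let a, b ∈ {0,1} with a ≠ b, let s ∈ ℝ, and let x, y ∈ {0,1}. If s·x + (1−s)·y = λ·a + (1−λ)·b, then either (s = λ, x = a, y = b) or (s = 1−λ, x = b, y = a). -/
/-- Entrywise core of the edge-invertibility lemma: for λ ∈ (0,1), λ ≠ 1/2,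
and `a ≠ b` in {0,1}, if `s*x + (1-s)*y = λ*a + (1-λ)*b` with `x, y ∈ {0,1}`,
then `(s, x, y) = (λ, a, b)` or `(s, x, y) = (1-λ, b, a)`. -/
theorem stmt_1 {lam : ℝ} (h0 : 0 < lam) (h1 : lam < 1) (hhalf : lam ≠ 1 / 2)
    {a b : ℝ} (ha : a ∈ ({0, 1} : Set ℝ)) (hb : b ∈ ({0, 1} : Set ℝ)) (hab : a ≠ b)
    (s : ℝ) {x y : ℝ} (hx : x ∈ ({0, 1} : Set ℝ)) (hy : y ∈ ({0, 1} : Set ℝ))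
    (heq : s * x + (1 - s) * y = lam * a + (1 - lam) * b) :
    (s = lam ∧ x = a ∧ y = b) ∨ (s = 1 - lam ∧ x = b ∧ y = a) := by
  simp only [Set.mem_insert_iff, Set.mem_singleton_iff] at ha hb hx hy
  rcases ha with rfl | rfl <;> rcases hb with rfl | rfl <;>
    rcases hx with rfl | rfl <;> rcases hy with rfl | rfl <;>
    ring_nf at heq <;>
    first
      | exact absurd rfl hab
      | (left; refine ⟨by linarith, rfl, rfl⟩)
      | (right; refine ⟨by linarith, rfl, rfl⟩)
      | (exfalso; linarith)
end

section
/- Let V be a finite linearly independent subset of ℝ^d, let V* = V ∪ {0}, let n be a natural number, and let λ ∈ (0,1) with λ ≠ 1/2. Let v_A, v_B be n×d real matrices whose rows all lie in V*, and set ṽ = λ·v_A + (1−λ)·v_B. Then for all n×d matrices v, v' whose rows all lie in V*, the equation λ·v + (1−λ)·v' = ṽ implies v = v_A and v' = v_B; i.e., (v_A, v_B) is the unique solution of ṽ = λ·v + (1−λ)·v' with rows in V*. -/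
private lemma stmt4_scal {lam p q r s : ℝ} (h0 : 0 < lam) (h1 : lam < 1)
    (hhalf : 2 * lam ≠ 1)
    (hp : p = 0 ∨ p = 1) (hq : q = 0 ∨ q = 1) (hr : r = 0 ∨ r = 1)
    (hs : s = 0 ∨ s = 1)
    (heq : lam * p + (1 - lam) * q - lam * r - (1 - lam) * s = 0) :
    p = r ∧ q = s := by
  rcases hp with rfl | rfl <;> rcases hq with rfl | rfl <;>
    rcases hr with rfl | rfl <;> rcases hs with rfl | rfl <;>
    constructor <;>
    first
      | rfl
      | linarith
      | exact absurd (by linarith : 2 * lam = 1) hhalf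

private lemma stmt4_row {d : ℕ} (V : Set (Fin d → ℝ))
    (hVli : LinearIndependent ℝ (fun u : V => (u : Fin d → ℝ)))
    {lam : ℝ} (h0 : 0 < lam) (h1 : lam < 1) (hhalf : lam ≠ 1 / 2)
    {a a' b b' : Fin d → ℝ} (ha : a ∈ V ∪ {0}) (ha' : a' ∈ V ∪ {0})
    (hb : b ∈ V ∪ {0}) (hb' : b' ∈ V ∪ {0})
    (heq : lam • a + (1 - lam) • b = lam • a' + (1 - lam) • b') :
    a = a' ∧ b = b' := by
  classical
  have h2 : 2 * lam ≠ 1 := fun h => hhalf (by linarith)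
  have hzV : (0 : Fin d → ℝ) ∉ V := fun h => hVli.ne_zero ⟨0, h⟩ rfl
  set g : (Fin d → ℝ) → (V →₀ ℝ) := fun x =>
    if h : x ∈ V then Finsupp.single ⟨x, h⟩ 1 else 0 with hg
  have hgval : ∀ x ∈ V ∪ ({0} : Set (Fin d → ℝ)),
      Finsupp.linearCombination ℝ (fun u : V => (u : Fin d → ℝ)) (g x) = x := by
    intro x hx
    rcases hx with hx | hx
    · simp [hg, hx]
    · simp only [Set.mem_singleton_iff] at hx
      subst hx
      simp [hg, hzV]
  have hl : lam • g a + (1 - lam) • g b - lam • g a' - (1 - lam) • g b' = 0 := by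
    apply linearIndependent_iff.mp hVli
    simp only [map_add, map_sub, map_smul, hgval a ha, hgval b hb,
      hgval a' ha', hgval b' hb']
    rw [sub_sub, sub_eq_zero, heq]
  have happ : ∀ y, y ∈ V ∪ ({0} : Set (Fin d → ℝ)) → ∀ x, ∀ hx : x ∈ V,
      g y ⟨x, hx⟩ = if y = x then 1 else 0 := by
    intro y hy x hx
    rcases hy with hy | hy
    · simp [hg, hy, Finsupp.single_apply, Subtype.ext_iff]
    · simp only [Set.mem_singleton_iff] at hy
      subst hy
      rw [if_neg (by rintro rfl; exact hzV hx)]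
      simp [hg, hzV]
  have key : ∀ x, ∀ hx : x ∈ V, (a = x ↔ a' = x) ∧ (b = x ↔ b' = x) := by
    intro x hx
    have h := DFunLike.congr_fun hl ⟨x, hx⟩
    simp only [Finsupp.coe_add, Finsupp.coe_sub, Finsupp.coe_smul, Pi.add_apply,
      Pi.sub_apply, Pi.smul_apply, smul_eq_mul, Finsupp.coe_zero, Pi.zero_apply,
      happ a ha x hx, happ b hb x hx, happ a' ha' x hx, happ b' hb' x hx] at h
    have hm : ∀ c : Fin d → ℝ, (if c = x then (1:ℝ) else 0) = 0 ∨
        (if c = x then (1:ℝ) else 0) = 1 := by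
      intro c; split_ifs <;> simp
    have := stmt4_scal h0 h1 h2 (hm a) (hm b) (hm a') (hm b') h
    constructor
    · have := this.1
      constructor <;> intro hh <;> [skip; skip] <;> split_ifs at this <;>
        first | assumption | simp_all
    · have := this.2
      constructor <;> intro hh <;> [skip; skip] <;> split_ifs at this <;>
        first | assumption | simp_all
  constructor
  · rcases ha with haV | ha0
    · exact ((key a haV).1.mp rfl).symm
    · rcases ha' with ha'V | ha'0
      · exact ((key a' ha'V).1.mpr rfl)
      · simp only [Set.mem_singleton_iff] at ha0 ha'0; rw [ha0, ha'0]
  · rcases hb with hbV | hb0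
    · exact ((key b hbV).2.mp rfl).symm
    · rcases hb' with hb'V | hb'0
      · exact ((key b' hb'V).2.mpr rfl)
      · simp only [Set.mem_singleton_iff] at hb0 hb'0; rw [hb0, hb'0]

/-- Lemma 2 (Node Feature Invertibility), at the mixing coefficient λ used in
the construction: if `V ⊆ ℝ^d` is finite and linearly independent,
`V* = V ∪ {0}`, λ ∈ (0,1), λ ≠ 1/2, and `vA, vB` are n×d matrices with rows in
`V*`, then `(vA, vB)` is the unique pair of matrices with rows in `V*` mixing
to `λ • vA + (1-λ) • vB`. -/
theorem stmt_4 {n d : ℕ} (V : Set (Fin d → ℝ)) (hVfin : V.Finite)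
    (hVli : LinearIndependent ℝ (fun u : V => (u : Fin d → ℝ)))
    {lam : ℝ} (h0 : 0 < lam) (h1 : lam < 1) (hhalf : lam ≠ 1 / 2)
    (vA vB : Matrix (Fin n) (Fin d) ℝ)
    (hA : ∀ i, vA i ∈ V ∪ {0}) (hB : ∀ i, vB i ∈ V ∪ {0}) :
    ∀ v v' : Matrix (Fin n) (Fin d) ℝ,
      (∀ i, v i ∈ V ∪ {0}) → (∀ i, v' i ∈ V ∪ {0}) →
      lam • v + (1 - lam) • v' = lam • vA + (1 - lam) • vB →
      v = vA ∧ v' = vB := by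
  intro v v' hv hv' heq
  have hrow : ∀ i, v i = vA i ∧ v' i = vB i := by
    intro i
    apply stmt4_row V hVli h0 h1 hhalf (hv i) (hA i) (hv' i) (hB i)
    funext j
    have := congrFun (congrFun heq i) j
    simpa [Matrix.add_apply, Matrix.smul_apply, Pi.add_apply, Pi.smul_apply,
      smul_eq_mul] using this
  constructor
  · ext i j; exact congrFun (hrow i).1 j
  · ext i j; exact congrFun (hrow i).2 j
end

section
/- Let V be a finite linearly independent subset of ℝ^d, let V* = V ∪ {0}, let n be a natural number, and let λ ∈ (0,1) with λ ≠ 1/2. Let v_A, v_B be n×d matrices with rows in V* and v_A ≠ v_B, and set ṽ = λ·v_A + (1−λ)·v_B. Then for every s ∈ (0,1) and all n×d matrices v, v' with rows in V*, the equation s·v + (1−s)·v' = ṽ implies either (s = λ, v = v_A, v' = v_B) or (s = 1−λ, v = v_B, v' = v_A). -/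
section Aux

variable {d : ℕ}

/-- coefficient finsupp of an element of `V ∪ {0}` -/
noncomputable def coefV (V : Set (Fin d → ℝ)) (x : Fin d → ℝ) : V →₀ ℝ :=
  @dite _ (x ∈ V) (Classical.dec _) (fun h => Finsupp.single ⟨x, h⟩ 1) (fun _ => 0)

lemma coefV_total (V : Set (Fin d → ℝ)) {x : Fin d → ℝ} (hx : x ∈ V ∪ {0}) :
    Finsupp.linearCombination ℝ (fun u : V => (u : Fin d → ℝ)) (coefV V x) = x := by
  rcases hx with h | h
  · rw [coefV, dif_pos h]; simp
  · have hx0 : x = 0 := Set.mem_singleton_iff.mp h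
    subst hx0
    by_cases h0 : (0 : Fin d → ℝ) ∈ V
    · rw [coefV, dif_pos h0]; simp
    · rw [coefV, dif_neg h0]; simp

lemma coefV_apply (V : Set (Fin d → ℝ)) (x : Fin d → ℝ) (w : V) :
    (coefV V x) w = if x = (w : Fin d → ℝ) then 1 else 0 := by
  by_cases h : x ∈ V
  · rw [coefV, dif_pos h, Finsupp.single_apply]
    simp [Subtype.ext_iff]
  · rw [coefV, dif_neg h]
    have hne : x ≠ (w : Fin d → ℝ) := fun hh => h (hh ▸ w.2)
    simp [hne]

lemma key_eq (V : Set (Fin d → ℝ))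
    (hVli : LinearIndependent ℝ (fun u : V => (u : Fin d → ℝ)))
    {s lam : ℝ} {a b c e : Fin d → ℝ}
    (ha : a ∈ V ∪ {0}) (hb : b ∈ V ∪ {0}) (hc : c ∈ V ∪ {0}) (he : e ∈ V ∪ {0})
    (heq : s • a + (1 - s) • b = lam • c + (1 - lam) • e) :
    ∀ w ∈ V, s * (if a = w then (1:ℝ) else 0) + (1 - s) * (if b = w then 1 else 0)
      = lam * (if c = w then 1 else 0) + (1 - lam) * (if e = w then 1 else 0) := by
  intro w hw
  set T := Finsupp.linearCombination ℝ (fun u : V => (u : Fin d → ℝ)) with hT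
  have hL : (s • coefV V a + (1 - s) • coefV V b
      - lam • coefV V c - (1 - lam) • coefV V e) = 0 := by
    apply linearIndependent_iff.mp hVli
    rw [map_sub, map_sub, map_add, map_smul, map_smul, map_smul, map_smul,
      coefV_total V ha, coefV_total V hb, coefV_total V hc, coefV_total V he]
    rw [heq]; abel
  have := DFunLike.congr_fun hL ⟨w, hw⟩
  simp only [Finsupp.coe_sub, Finsupp.coe_add, Finsupp.coe_smul, Pi.sub_apply, Pi.add_apply,
    Pi.smul_apply, smul_eq_mul, Finsupp.coe_zero, Pi.zero_apply] at this
  rw [coefV_apply, coefV_apply, coefV_apply, coefV_apply] at this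
  linarith

lemma row_lemma (V : Set (Fin d → ℝ))
    (hVli : LinearIndependent ℝ (fun u : V => (u : Fin d → ℝ)))
    {lam s : ℝ} (h0 : 0 < lam) (h1 : lam < 1) (hs0 : 0 < s) (hs1 : s < 1)
    {a b c e : Fin d → ℝ}
    (ha : a ∈ V ∪ {0}) (hb : b ∈ V ∪ {0}) (hc : c ∈ V ∪ {0}) (he : e ∈ V ∪ {0})
    (heq : s • a + (1 - s) • b = lam • c + (1 - lam) • e) :
    (c = e → a = c ∧ b = c) ∧
    (c ≠ e → (s = lam ∧ a = c ∧ b = e) ∨ (s = 1 - lam ∧ a = e ∧ b = c)) := by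
  have h0V : (0 : Fin d → ℝ) ∉ V := fun h => hVli.ne_zero ⟨0, h⟩ rfl
  have K := key_eq V hVli ha hb hc he heq
  -- claim A : a ∈ {c, e, 0}
  have claimA : a = c ∨ a = e ∨ a = 0 := by
    rcases ha with haV | ha0
    · by_contra h
      push_neg at h
      obtain ⟨h1', h2', _⟩ := h
      have Ka := K a haV
      rw [if_pos rfl, if_neg (fun hh : c = a => h1' hh.symm),
        if_neg (fun hh : e = a => h2' hh.symm)] at Ka
      rcases eq_or_ne b a with h' | h'
      · rw [if_pos h'] at Ka; linarith
      · rw [if_neg h'] at Ka; linarith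
    · right; right; exact ha0
  have claimB : b = c ∨ b = e ∨ b = 0 := by
    rcases hb with hbV | hb0
    · by_contra h
      push_neg at h
      obtain ⟨h1', h2', _⟩ := h
      have Kb := K b hbV
      rw [if_pos rfl, if_neg (fun hh : c = b => h1' hh.symm),
        if_neg (fun hh : e = b => h2' hh.symm)] at Kb
      rcases eq_or_ne a b with h' | h'
      · rw [if_pos h'] at Kb; linarith
      · rw [if_neg h'] at Kb; linarith
    · right; right; exact hb0
  constructor
  · -- c = e case
    intro hce
    rcases hc with hcV | hc0
    · have Kc := K c hcV
      rw [if_pos rfl, if_pos hce.symm] at Kc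
      constructor
      · by_contra hac
        rw [if_neg hac] at Kc
        rcases eq_or_ne b c with h' | h'
        · rw [if_pos h'] at Kc; linarith
        · rw [if_neg h'] at Kc; linarith
      · by_contra hbc
        rw [if_neg hbc] at Kc
        rcases eq_or_ne a c with h' | h'
        · rw [if_pos h'] at Kc; linarith
        · rw [if_neg h'] at Kc; linarith
    · have hc0' : c = 0 := Set.mem_singleton_iff.mp hc0
      have he0' : e = 0 := hce ▸ hc0'
      constructor
      · rcases claimA with h' | h' | h'
        · exact h'
        · rw [h', he0', hc0']
        · rw [h', hc0']
      · rcases claimB with h' | h' | h'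
        · exact h'
        · rw [h', he0', hc0']
        · rw [h', hc0']
  · -- c ≠ e case
    intro hce
    rcases hc with hcV | hc0
    · rcases he with heV | he0
      · -- c ∈ V, e ∈ V
        have Kc := K c hcV
        rw [if_pos rfl, if_neg (fun hh : e = c => hce hh.symm)] at Kc
        have Ke := K e heV
        rw [if_pos rfl, if_neg hce] at Ke
        rcases eq_or_ne a c with hac | hac <;> rcases eq_or_ne b c with hbc | hbc
        · rw [if_pos hac, if_pos hbc] at Kc; linarith
        · rw [if_pos hac, if_neg hbc] at Kc
          have hae : a ≠ e := fun h => hce (hac ▸ h)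
          rw [if_neg hae] at Ke
          rcases eq_or_ne b e with hbe | hbe
          · rw [if_pos hbe] at Ke
            exact Or.inl ⟨by linarith, hac, hbe⟩
          · rw [if_neg hbe] at Ke; linarith
        · rw [if_neg hac, if_pos hbc] at Kc
          have hbe : b ≠ e := fun h => hce (hbc ▸ h)
          rw [if_neg hbe] at Ke
          rcases eq_or_ne a e with hae | hae
          · rw [if_pos hae] at Ke
            exact Or.inr ⟨by linarith, hae, hbc⟩
          · rw [if_neg hae] at Ke; linarith
        · rw [if_neg hac, if_neg hbc] at Kc; linarith
      · -- c ∈ V, e = 0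
        have he0' : e = 0 := Set.mem_singleton_iff.mp he0
        have hec : e ≠ c := by
          intro h
          rw [← h, he0'] at hcV
          exact h0V hcV
        have Kc := K c hcV
        rw [if_pos rfl, if_neg hec] at Kc
        rcases eq_or_ne a c with hac | hac <;> rcases eq_or_ne b c with hbc | hbc
        · rw [if_pos hac, if_pos hbc] at Kc; linarith
        · rw [if_pos hac, if_neg hbc] at Kc
          have hbe : b = e := by
            rcases claimB with h' | h' | h'
            · exact absurd h' hbc
            · exact h'
            · rw [h', he0']
          exact Or.inl ⟨by linarith, hac, hbe⟩
        · rw [if_neg hac, if_pos hbc] at Kc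
          have hae : a = e := by
            rcases claimA with h' | h' | h'
            · exact absurd h' hac
            · exact h'
            · rw [h', he0']
          exact Or.inr ⟨by linarith, hae, hbc⟩
        · rw [if_neg hac, if_neg hbc] at Kc; linarith
    · rcases he with heV | he0
      · -- c = 0, e ∈ V
        have hc0' : c = 0 := Set.mem_singleton_iff.mp hc0
        have Ke := K e heV
        rw [if_pos rfl, if_neg hce] at Ke
        rcases eq_or_ne a e with hae | hae <;> rcases eq_or_ne b e with hbe | hbe
        · rw [if_pos hae, if_pos hbe] at Ke; linarith
        · rw [if_pos hae, if_neg hbe] at Ke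
          have hbc : b = c := by
            rcases claimB with h' | h' | h'
            · exact h'
            · exact absurd h' hbe
            · rw [h', hc0']
          exact Or.inr ⟨by linarith, hae, hbc⟩
        · rw [if_neg hae, if_pos hbe] at Ke
          have hac : a = c := by
            rcases claimA with h' | h' | h'
            · exact h'
            · exact absurd h' hae
            · rw [h', hc0']
          exact Or.inl ⟨by linarith, hac, hbe⟩
        · rw [if_neg hae, if_neg hbe] at Ke; linarith
      · exact absurd ((Set.mem_singleton_iff.mp hc0).trans
          (Set.mem_singleton_iff.mp he0).symm) hce

end Aux

/-- Strengthened Lemma 2: if `V ⊆ ℝ^d` is finite and linearly independent,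
`V* = V ∪ {0}`, λ ∈ (0,1), λ ≠ 1/2, and `vA ≠ vB` are n×d matrices with rows
in `V*`, then for every `s ∈ (0,1)` and matrices `v, v'` with rows in `V*`,
`s • v + (1-s) • v' = λ • vA + (1-λ) • vB` implies `(s, v, v') = (λ, vA, vB)`
or `(s, v, v') = (1-λ, vB, vA)`. -/
theorem stmt_10 {n d : ℕ} (V : Set (Fin d → ℝ)) (hVfin : V.Finite)
    (hVli : LinearIndependent ℝ (fun u : V => (u : Fin d → ℝ)))
    {lam : ℝ} (h0 : 0 < lam) (h1 : lam < 1) (hhalf : lam ≠ 1 / 2)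
    (vA vB : Matrix (Fin n) (Fin d) ℝ)
    (hA : ∀ i, vA i ∈ V ∪ {0}) (hB : ∀ i, vB i ∈ V ∪ {0}) (hne : vA ≠ vB) :
    ∀ (s : ℝ), 0 < s → s < 1 →
      ∀ v v' : Matrix (Fin n) (Fin d) ℝ,
        (∀ i, v i ∈ V ∪ {0}) → (∀ i, v' i ∈ V ∪ {0}) →
        s • v + (1 - s) • v' = lam • vA + (1 - lam) • vB →
        (s = lam ∧ v = vA ∧ v' = vB) ∨ (s = 1 - lam ∧ v = vB ∧ v' = vA) := by
  intro s hs0 hs1 v v' hv hv' heq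
  have hrow : ∀ i, s • v i + (1 - s) • v' i = lam • vA i + (1 - lam) • vB i := by
    intro i
    funext j
    have := congrFun (congrFun heq i) j
    simpa using this
  have R : ∀ i, (vA i = vB i → v i = vA i ∧ v' i = vA i) ∧
      (vA i ≠ vB i → (s = lam ∧ v i = vA i ∧ v' i = vB i) ∨
        (s = 1 - lam ∧ v i = vB i ∧ v' i = vA i)) := fun i =>
    row_lemma V hVli h0 h1 hs0 hs1 (hv i) (hv' i) (hA i) (hB i) (hrow i)
  obtain ⟨i0, hi0⟩ : ∃ i, vA i ≠ vB i := by
    by_contra h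
    push_neg at h
    exact hne (funext h)
  have hlam_ne : lam ≠ 1 - lam := fun h => hhalf (by linarith)
  rcases (R i0).2 hi0 with ⟨hs, _, _⟩ | ⟨hs, _, _⟩
  · left
    refine ⟨hs, ?_, ?_⟩
    · funext i
      rcases eq_or_ne (vA i) (vB i) with h | h
      · exact ((R i).1 h).1
      · rcases (R i).2 h with ⟨_, h2, _⟩ | ⟨hs', _, _⟩
        · exact h2
        · exact absurd (hs.symm.trans hs') hlam_ne
    · funext i
      rcases eq_or_ne (vA i) (vB i) with h | h
      · exact ((R i).1 h).2.trans h
      · rcases (R i).2 h with ⟨_, _, h3⟩ | ⟨hs', _, _⟩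
        · exact h3
        · exact absurd (hs.symm.trans hs') hlam_ne
  · right
    refine ⟨hs, ?_, ?_⟩
    · funext i
      rcases eq_or_ne (vA i) (vB i) with h | h
      · exact ((R i).1 h).1.trans h
      · rcases (R i).2 h with ⟨hs', _, _⟩ | ⟨_, h2, _⟩
        · exact absurd (hs'.symm.trans hs) hlam_ne
        · exact h2
    · funext i
      rcases eq_or_ne (vA i) (vB i) with h | h
      · exact ((R i).1 h).2
      · rcases (R i).2 h with ⟨hs', _, _⟩ | ⟨_, _, h3⟩
        · exact absurd (hs'.symm.trans hs) hlam_ne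
        · exact h3
end

section
/- Let B be an m×d real matrix whose rows are linearly independent, let n be a natural number, let 𝒯 be a set of n×m real matrices that is linearly independent in the vector space of n×m real matrices, and let λ ∈ (0,1) with λ ≠ 1/2. Let T_A, T_B ∈ 𝒯 and set ṽ = λ·(T_A B) + (1−λ)·(T_B B). Then for all T, T' ∈ 𝒯, the equation λ·(T B) + (1−λ)·(T' B) = ṽ implies T = T_A and T' = T_B; in particular, (v, v') = (T_A B, T_B B) is the unique solution of ṽ = λ·v + (1−λ)·v' among matrices of the form v = T B, v' = T' B with T, T' ∈ 𝒯. -/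
/-! Right multiplication by a matrix with linearly independent rows is injective, so the
equation can be cancelled down to `λ T + (1-λ) T' = λ T_A + (1-λ) T_B` in the span of `𝒯`.
Comparing coefficients in the linearly independent family `𝒯`, the two sides can only
agree by `T = T_A, T' = T_B`, by swapping the two terms (forcing `λ = 1-λ`), or by
cancellation (forcing `λ + (1-λ) = 0`). -/

theorem Matrix.mul_left_injective_of_linearIndependent_row {R : Type*} [Semiring R]
    {l m n : Type*} [Fintype m] {B : Matrix m n R} (hB : LinearIndependent R B.row) :
    Function.Injective (fun X : Matrix l m R => X * B) :=
  fun _ _ h => Matrix.ext_row fun i => Matrix.vecMul_injective_iff.2 hB congr(($h).row i)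

theorem LinearIndependent.eq_and_eq_of_smul_add_smul_eq {R M ι : Type*} [Semiring R]
    [AddCommMonoid M] [Module R M] {v : ι → M} (hv : LinearIndependent R v) {a b : R}
    (ha : a ≠ 0) (hb : b ≠ 0) (hab : a ≠ b) (hab' : a + b ≠ 0) {i j k l : ι}
    (h : a • v i + b • v j = a • v k + b • v l) : i = k ∧ j = l := by
  have hcoeff : Finsupp.single i a + Finsupp.single j b =
      Finsupp.single k a + Finsupp.single l b :=
    hv (by simpa only [map_add, Finsupp.linearCombination_single] using h)
  rcases (Finsupp.single_add_single_eq_single_add_single ha hb).1 hcoeff with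
    hik | ⟨hab_eq, -⟩ | ⟨hab_zero, -⟩
  · exact hik
  · exact absurd hab_eq hab
  · exact absurd hab_zero hab'

/-- Lemma 3 (Node Feature Invertibility, coefficient-matrix condition), at the
mixing coefficient λ used in the construction: if the rows of `B` are linearly
independent, `𝒯` is a linearly independent set of n×m matrices, λ ∈ (0,1),
λ ≠ 1/2, and `T_A, T_B ∈ 𝒯`, then for `T, T' ∈ 𝒯`,
`λ • (T * B) + (1-λ) • (T' * B) = λ • (T_A * B) + (1-λ) • (T_B * B)` implies
`T = T_A` and `T' = T_B`. -/
theorem stmt_12 {n m d : ℕ} (B : Matrix (Fin m) (Fin d) ℝ)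
    (hB : LinearIndependent ℝ (fun i : Fin m => (B i : Fin d → ℝ)))
    (𝒯 : Set (Matrix (Fin n) (Fin m) ℝ))
    (h𝒯 : LinearIndependent ℝ (fun T : 𝒯 => (T : Matrix (Fin n) (Fin m) ℝ)))
    {lam : ℝ} (h0 : 0 < lam) (h1 : lam < 1) (hhalf : lam ≠ 1 / 2)
    {TA TB : Matrix (Fin n) (Fin m) ℝ} (hTA : TA ∈ 𝒯) (hTB : TB ∈ 𝒯) :
    ∀ T T' : Matrix (Fin n) (Fin m) ℝ, T ∈ 𝒯 → T' ∈ 𝒯 →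
      lam • (T * B) + (1 - lam) • (T' * B) = lam • (TA * B) + (1 - lam) • (TB * B) →
      T = TA ∧ T' = TB := by
  intro T T' hT hT' heq
  have hmix : lam • T + (1 - lam) • T' = lam • TA + (1 - lam) • TB :=
    Matrix.mul_left_injective_of_linearIndependent_row (B := B) hB
      (by simpa only [Matrix.add_mul, Matrix.smul_mul] using heq)
  have hcoeff := h𝒯.eq_and_eq_of_smul_add_smul_eq (i := ⟨T, hT⟩) (j := ⟨T', hT'⟩)
    (k := ⟨TA, hTA⟩) (l := ⟨TB, hTB⟩) h0.ne' (sub_ne_zero.2 h1.ne')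
    (fun h => hhalf (by linarith)) (by simp) hmix
  simpa only [Subtype.mk.injEq] using hcoeff
end

section
/- Let n, d be natural numbers, let V be a finite linearly independent subset of ℝ^d, let V* = V ∪ {0}, let λ ∈ (0,1) with λ ≠ 1/2, and let μ ∈ (0,1). Let e_A, e_B, e'_A, e'_B be binary n×n matrices and let v_A, v_B, v'_A, v'_B be n×d matrices with rows in V*. Assume (e_A, v_A) ≠ (e_B, v_B). If μ·e'_A + (1−μ)·e'_B = λ·e_A + (1−λ)·e_B and μ·v'_A + (1−μ)·v'_B = λ·v_A + (1−λ)·v_B, then either (μ = λ, e'_A = e_A, e'_B = e_B, v'_A = v_A, v'_B = v_B) or (μ = 1−λ, e'_A = e_B, e'_B = e_A, v'_A = v_B, v'_B = v_A). In other words, the two original node-featured graphs (v_A, e_A) and (v_B, e_B), together with the mixing ratio λ, are uniquely recovered (up to the swap λ ↔ 1−λ) from the mixed graph. -/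
open Set

section Scalar

variable {lam mu a b a' b' : ℝ}

theorem eq_or_eq_one_sub_of_mix_eq (h0 : 0 < lam) (h1 : lam < 1)
    (ha : a = 0 ∨ a = 1) (hb : b = 0 ∨ b = 1) (ha' : a' = 0 ∨ a' = 1) (hb' : b' = 0 ∨ b' = 1)
    (hab : a ≠ b) (h : mu * a' + (1 - mu) * b' = lam * a + (1 - lam) * b) :
    mu = lam ∨ mu = 1 - lam := by
  rcases ha with rfl | rfl <;> rcases hb with rfl | rfl <;> rcases ha' with rfl | rfl <;>
    rcases hb' with rfl | rfl <;> norm_num at * <;>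
    first | linarith | (left; linarith) | (right; linarith)

theorem eq_and_eq_of_mix_eq (h0 : 0 < lam) (h1 : lam < 1) (hhalf : lam ≠ 1 / 2)
    (ha : a = 0 ∨ a = 1) (hb : b = 0 ∨ b = 1) (ha' : a' = 0 ∨ a' = 1) (hb' : b' = 0 ∨ b' = 1)
    (h : lam * a' + (1 - lam) * b' = lam * a + (1 - lam) * b) : a' = a ∧ b' = b := by
  have : lam ≠ 1 - lam := fun h => hhalf (by linarith)
  rcases ha with rfl | rfl <;> rcases hb with rfl | rfl <;> rcases ha' with rfl | rfl <;>
    rcases hb' with rfl | rfl <;> norm_num at * <;> first | linarith | exact this (by linarith)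

end Scalar

def binaryVectors (ι : Type*) : Set (ι → ℝ) :=
  {f | ∀ i, f i = 0 ∨ f i = 1}

def MixupRecoverable {E : Type*} [AddCommGroup E] [Module ℝ E] (S : Set E) (lam : ℝ) : Prop :=
  ∀ x ∈ S, ∀ y ∈ S, ∀ x' ∈ S, ∀ y' ∈ S, ∀ mu : ℝ, x ≠ y →
    mu • x' + (1 - mu) • y' = lam • x + (1 - lam) • y →
    (mu = lam ∧ x' = x ∧ y' = y) ∨ (mu = 1 - lam ∧ x' = y ∧ y' = x)

theorem mixupRecoverable_binaryVectors (ι : Type*) {lam : ℝ} (h0 : 0 < lam) (h1 : lam < 1)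
    (hhalf : lam ≠ 1 / 2) : MixupRecoverable (binaryVectors ι) lam := by
  intro a ha b hb a' ha' b' hb' mu hab h
  have hpt : ∀ i, mu * a' i + (1 - mu) * b' i = lam * a i + (1 - lam) * b i := fun i => by
    simpa using congrFun h i
  obtain ⟨i, hi⟩ := Function.ne_iff.1 hab
  rcases eq_or_eq_one_sub_of_mix_eq h0 h1 (ha i) (hb i) (ha' i) (hb' i) hi (hpt i) with rfl | rfl
  · have hj j := eq_and_eq_of_mix_eq h0 h1 hhalf (ha j) (hb j) (ha' j) (hb' j) (hpt j)
    exact Or.inl ⟨rfl, funext fun j => (hj j).1, funext fun j => (hj j).2⟩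
  · have hj j := eq_and_eq_of_mix_eq h0 h1 hhalf (ha j) (hb j) (hb' j) (ha' j)
      (by linarith [hpt j])
    exact Or.inr ⟨rfl, funext fun j => (hj j).2, funext fun j => (hj j).1⟩

theorem MixupRecoverable.of_injOn {E F : Type*} [AddCommGroup E] [Module ℝ E] [AddCommGroup F]
    [Module ℝ F] {S : Set E} {T : Set F} {lam : ℝ} (L : E →ₗ[ℝ] F) (hmaps : MapsTo L S T)
    (hinj : InjOn L S) (hT : MixupRecoverable T lam) : MixupRecoverable S lam := by
  intro x hx y hy x' hx' y' hy' mu hxy h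
  have hL : mu • L x' + (1 - mu) • L y' = lam • L x + (1 - lam) • L y := by
    simpa using congrArg L h
  rcases hT _ (hmaps hx) _ (hmaps hy) _ (hmaps hx') _ (hmaps hy') mu (hxy ∘ (hinj hx hy ·))
    hL with ⟨hmu, h₁, h₂⟩ | ⟨hmu, h₁, h₂⟩
  · exact Or.inl ⟨hmu, hinj hx' hx h₁, hinj hy' hy h₂⟩
  · exact Or.inr ⟨hmu, hinj hx' hy h₁, hinj hy' hx h₂⟩

theorem LinearIndependent.exists_linearMap_apply_eq_single {K E ι : Type*} [Field K]
    [AddCommGroup E] [Module K E] {v : ι → E} (hv : LinearIndependent K v) :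
    ∃ g : E →ₗ[K] ι →₀ K, ∀ i, g (v i) = Finsupp.single i 1 := by
  obtain ⟨g, hg⟩ := LinearMap.exists_extend hv.repr
  refine ⟨g, fun i => ?_⟩
  rw [← hv.repr_eq_single i ⟨v i, Submodule.subset_span (mem_range_self i)⟩ rfl, ← hg]
  rfl

section Coordinates

variable {K E : Type*} [Field K] [AddCommGroup E] [Module K E] {V : Set E}
  {g : E →ₗ[K] V →₀ K}

theorem apply_eq_zero_or_eq_one_of_mem_union_zero (hg : ∀ v : V, g v = Finsupp.single v 1)
    {x : E} (hx : x ∈ V ∪ {0}) (v : V) : g x v = 0 ∨ g x v = 1 := by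
  classical
  rcases hx with hx | rfl
  · rw [show x = (⟨x, hx⟩ : V) from rfl, hg, Finsupp.single_apply]
    split_ifs <;> simp
  · simp

theorem injOn_union_singleton_zero (hg : ∀ v : V, g v = Finsupp.single v 1) :
    InjOn g (V ∪ {0}) := by
  have hsingle (v : V) : g v ≠ 0 := by simp [hg]
  rintro x (hx | rfl) y (hy | rfl) hxy
  · have : Finsupp.single (⟨x, hx⟩ : V) (1 : K) = Finsupp.single ⟨y, hy⟩ 1 := by
      rwa [← hg, ← hg]
    exact congrArg Subtype.val ((Finsupp.single_left_inj one_ne_zero).1 this)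
  · exact absurd (hxy.trans (map_zero g)) (hsingle ⟨x, hx⟩)
  · exact absurd (hxy.symm.trans (map_zero g)) (hsingle ⟨y, hy⟩)
  · rfl

end Coordinates

section Graphs

variable {n d : ℕ}

def nodeFeaturedGraphs (V : Set (Fin d → ℝ)) :
    Set (Matrix (Fin n) (Fin n) ℝ × Matrix (Fin n) (Fin d) ℝ) :=
  {G | IsBinary G.1 ∧ ∀ i, G.2 i ∈ V ∪ {0}}

/-- Adjacency entries followed by the `V`-coordinates of every node feature. -/
noncomputable def graphEncoding {ι : Type*} (g : (Fin d → ℝ) →ₗ[ℝ] ι →₀ ℝ) :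
    Matrix (Fin n) (Fin n) ℝ × Matrix (Fin n) (Fin d) ℝ →ₗ[ℝ]
      (Fin n × Fin n ⊕ Fin n × ι → ℝ) where
  toFun G := Sum.elim (fun p => G.1 p.1 p.2) (fun p => g (G.2 p.1) p.2)
  map_add' G H := by
    ext (p | p)
    exacts [rfl, congr($(map_add g (G.2 p.1) (H.2 p.1)) p.2)]
  map_smul' c G := by
    ext (p | p)
    exacts [rfl, congr($(map_smul g c (G.2 p.1)) p.2)]

theorem mixupRecoverable_nodeFeaturedGraphs {V : Set (Fin d → ℝ)}
    (hV : LinearIndependent ℝ (fun u : V => (u : Fin d → ℝ))) {lam : ℝ} (h0 : 0 < lam)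
    (h1 : lam < 1) (hhalf : lam ≠ 1 / 2) :
    MixupRecoverable (nodeFeaturedGraphs (n := n) V) lam := by
  obtain ⟨g, hg⟩ := hV.exists_linearMap_apply_eq_single
  refine (mixupRecoverable_binaryVectors _ h0 h1 hhalf).of_injOn (graphEncoding g) ?_ ?_
  · rintro ⟨e, v⟩ ⟨he, hv⟩ (⟨i, j⟩ | ⟨i, u⟩)
    exacts [he i j, apply_eq_zero_or_eq_one_of_mem_union_zero hg (hv i) u]
  · rintro ⟨e, v⟩ ⟨-, hv⟩ ⟨e', v'⟩ ⟨-, hv'⟩ h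
    refine Prod.ext (funext₂ fun i j => congrFun h (.inl (i, j))) (funext fun i => ?_)
    exact injOn_union_singleton_zero hg (hv i) (hv' i)
      (Finsupp.ext fun u => congrFun h (.inr (i, u)))

end Graphs

theorem stmt_15_general {n d : ℕ} (V : Set (Fin d → ℝ))
    (hVli : LinearIndependent ℝ (fun u : V => (u : Fin d → ℝ)))
    {lam : ℝ} (h0 : 0 < lam) (h1 : lam < 1) (hhalf : lam ≠ 1 / 2)
    {mu : ℝ}
    (eA eB eA' eB' : Matrix (Fin n) (Fin n) ℝ)
    (heA : IsBinary eA) (heB : IsBinary eB) (heA' : IsBinary eA') (heB' : IsBinary eB')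
    (vA vB vA' vB' : Matrix (Fin n) (Fin d) ℝ)
    (hvA : ∀ i, vA i ∈ V ∪ {0}) (hvB : ∀ i, vB i ∈ V ∪ {0})
    (hvA' : ∀ i, vA' i ∈ V ∪ {0}) (hvB' : ∀ i, vB' i ∈ V ∪ {0})
    (hne : (eA, vA) ≠ (eB, vB))
    (hedge : mu • eA' + (1 - mu) • eB' = lam • eA + (1 - lam) • eB)
    (hfeat : mu • vA' + (1 - mu) • vB' = lam • vA + (1 - lam) • vB) :
    (mu = lam ∧ eA' = eA ∧ eB' = eB ∧ vA' = vA ∧ vB' = vB) ∨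
    (mu = 1 - lam ∧ eA' = eB ∧ eB' = eA ∧ vA' = vB ∧ vB' = vA) := by
  rcases mixupRecoverable_nodeFeaturedGraphs hVli h0 h1 hhalf
      (eA, vA) ⟨heA, hvA⟩ (eB, vB) ⟨heB, hvB⟩ (eA', vA') ⟨heA', hvA'⟩ (eB', vB') ⟨heB', hvB'⟩
      mu hne (Prod.ext hedge hfeat) with
    ⟨rfl, hA, hB⟩ | ⟨rfl, hA, hB⟩ <;> simp only [Prod.mk.injEq] at hA hB
  · exact Or.inl ⟨rfl, hA.1, hB.1, hA.2, hB.2⟩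
  · exact Or.inr ⟨rfl, hA.1, hB.1, hA.2, hB.2⟩

/-- Theorem 1 (Intrusion-Freeness, under the condition of Lemma 2): the two
original node-featured graphs and the mixing ratio λ are uniquely recovered,
up to the swap λ ↔ 1-λ, from the mixed graph. -/
theorem stmt_15 {n d : ℕ} (V : Set (Fin d → ℝ)) (hVfin : V.Finite)
    (hVli : LinearIndependent ℝ (fun u : V => (u : Fin d → ℝ)))
    {lam : ℝ} (h0 : 0 < lam) (h1 : lam < 1) (hhalf : lam ≠ 1 / 2)
    {mu : ℝ} (hmu0 : 0 < mu) (hmu1 : mu < 1)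
    (eA eB eA' eB' : Matrix (Fin n) (Fin n) ℝ)
    (heA : IsBinary eA) (heB : IsBinary eB) (heA' : IsBinary eA') (heB' : IsBinary eB')
    (vA vB vA' vB' : Matrix (Fin n) (Fin d) ℝ)
    (hvA : ∀ i, vA i ∈ V ∪ {0}) (hvB : ∀ i, vB i ∈ V ∪ {0})
    (hvA' : ∀ i, vA' i ∈ V ∪ {0}) (hvB' : ∀ i, vB' i ∈ V ∪ {0})
    (hne : (eA, vA) ≠ (eB, vB))
    (hedge : mu • eA' + (1 - mu) • eB' = lam • eA + (1 - lam) • eB)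
    (hfeat : mu • vA' + (1 - mu) • vB' = lam • vA + (1 - lam) • vB) :
    (mu = lam ∧ eA' = eA ∧ eB' = eB ∧ vA' = vA ∧ vB' = vB) ∨
    (mu = 1 - lam ∧ eA' = eB ∧ eB' = eA ∧ vA' = vB ∧ vB' = vA) :=
  stmt_15_general V hVli h0 h1 hhalf eA eB eA' eB' heA heB heA' heB' vA vB vA' vB' hvA hvB hvA' hvB'
    hne hedge hfeat
end

section
/- Let n, m, d be natural numbers, let B be an m×d real matrix whose rows are linearly independent, let 𝒯 be a set of n×m real matrices that is linearly independent in the vector space of n×m matrices, let λ ∈ (0,1) with λ ≠ 1/2, and let μ ∈ (0,1). Let e_A, e_B, e'_A, e'_B be binary n×n matrices and let T_A, T_B, T'_A, T'_B ∈ 𝒯. Assume (e_A, T_A) ≠ (e_B, T_B). If μ·e'_A + (1−μ)·e'_B = λ·e_A + (1−λ)·e_B and μ·(T'_A B) + (1−μ)·(T'_B B) = λ·(T_A B) + (1−λ)·(T_B B), then either (μ = λ, e'_A = e_A, e'_B = e_B, T'_A = T_A, T'_B = T_B) or (μ = 1−λ, e'_A = e_B, e'_B = e_A, T'_A = T_B,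 T'_B = T_A). -/
lemma li3 {ι V : Type*} [AddCommGroup V] [Module ℝ V] {f : ι → V}
    (hf : LinearIndependent ℝ f) {i j k : ι} (hij : i ≠ j) (hik : i ≠ k) (hjk : j ≠ k)
    {a b c : ℝ} (h : a • f i + b • f j + c • f k = 0) : a = 0 ∧ b = 0 ∧ c = 0 := by
  classical
  have key := linearIndependent_iff'.mp hf {i, j, k}
    (fun x => if x = i then a else if x = j then b else c) ?_
  · refine ⟨?_, ?_, ?_⟩
    · simpa using key i (by simp)
    · simpa [hij.symm] using key j (by simp)
    · simpa [hik.symm, hjk.symm] using key k (by simp)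
  · rw [Finset.sum_insert (by simp [hij, hik]), Finset.sum_insert (by simp [hjk]),
      Finset.sum_singleton]
    simpa [hij.symm, hik.symm, hjk.symm, add_assoc] using h

lemma li4 {ι V : Type*} [AddCommGroup V] [Module ℝ V] {f : ι → V}
    (hf : LinearIndependent ℝ f) {i j k l : ι} (hij : i ≠ j) (hik : i ≠ k) (hil : i ≠ l)
    (hjk : j ≠ k) (hjl : j ≠ l) (hkl : k ≠ l)
    {a b c e : ℝ} (h : a • f i + b • f j + c • f k + e • f l = 0) :
    a = 0 ∧ b = 0 ∧ c = 0 ∧ e = 0 := by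
  classical
  have key := linearIndependent_iff'.mp hf {i, j, k, l}
    (fun x => if x = i then a else if x = j then b else if x = k then c else e) ?_
  · refine ⟨?_, ?_, ?_, ?_⟩
    · simpa using key i (by simp)
    · simpa [hij.symm] using key j (by simp)
    · simpa [hik.symm, hjk.symm] using key k (by simp)
    · simpa [hil.symm, hjl.symm, hkl.symm] using key l (by simp)
  · rw [Finset.sum_insert (by simp [hij, hik, hil]), Finset.sum_insert (by simp [hjk, hjl]),
      Finset.sum_insert (by simp [hkl]), Finset.sum_singleton]
    simpa [hij.symm, hik.symm, hil.symm, hjk.symm, hjl.symm, hkl.symm, add_assoc] using h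

lemma pair_eq {ι V : Type*} [AddCommGroup V] [Module ℝ V] {f : ι → V}
    (hf : LinearIndependent ℝ f) {α β : ℝ}
    (hα0 : α ≠ 0) (hα1 : α ≠ 1) (hβ0 : β ≠ 0) (hβ1 : β ≠ 1)
    {u v w z : ι} (h : α • f u + (1 - α) • f v = β • f w + (1 - β) • f z) :
    (α = β ∧ u = w ∧ v = z) ∨ (α = 1 - β ∧ u = z ∧ v = w) ∨ (u = v ∧ w = z ∧ u = w) := by
  classical
  have hinj := hf.injective
  have cancel : ∀ {c : ℝ} {x y : ι}, c ≠ 0 → c • f x = c • f y → x = y := by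
    intro c x y hc hxy
    have : f x = f y := by
      have := sub_eq_zero.mpr hxy
      rw [← smul_sub] at this
      rcases smul_eq_zero.mp this with h0 | h0
      · exact absurd h0 hc
      · exact sub_eq_zero.mp h0
    exact hinj this
  have h1α : (1:ℝ) - α ≠ 0 := fun H => hα1 (by linarith)
  have h1β : (1:ℝ) - β ≠ 0 := fun H => hβ1 (by linarith)
  by_cases huv : u = v
  · subst huv
    by_cases hwz : w = z
    · subst hwz
      have hfuw : f u = f w := by linear_combination (norm := module) h
      exact Or.inr (Or.inr ⟨rfl, rfl, hinj hfuw⟩)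
    · by_cases huw : u = w
      · subst huw
        have h2 : (1 - β) • f u = (1 - β) • f z := by linear_combination (norm := module) h
        exact absurd (cancel h1β h2) hwz
      · by_cases huz : u = z
        · subst huz
          have h2 : β • f u = β • f w := by linear_combination (norm := module) h
          exact absurd (cancel hβ0 h2) huw
        · have h3 : (1:ℝ) • f u + (-β) • f w + (-(1-β)) • f z = 0 := by
            linear_combination (norm := module) h
          exact absurd (li3 hf huw huz hwz h3).1 one_ne_zero
  · by_cases hwz : w = z
    · subst hwz
      by_cases huw : u = w
      · subst huw
        have h2 : (1 - α) • f v = (1 - α) • f u := by linear_combination (norm := module) h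
        exact absurd (cancel h1α h2).symm huv
      · by_cases hvw : v = w
        · subst hvw
          have h2 : α • f u = α • f v := by linear_combination (norm := module) h
          exact absurd (cancel hα0 h2) huw
        · have h3 : α • f u + (1-α) • f v + (-1 : ℝ) • f w = 0 := by
            linear_combination (norm := module) h
          exact absurd (li3 hf huv huw hvw h3).1 hα0
    · by_cases huw : u = w
      · subst huw
        by_cases hvz : v = z
        · subst hvz
          refine Or.inl ⟨?_, rfl, rfl⟩
          by_contra hab
          have h2 : (α - β) • f u = (α - β) • f v := by linear_combination (norm := module) h
          exact huv (cancel (sub_ne_zero.mpr hab) h2)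
        · have h3 : (α - β) • f u + (1-α) • f v + (-(1-β)) • f z = 0 := by
            linear_combination (norm := module) h
          obtain ⟨-, hc, -⟩ := li3 hf huv hwz hvz h3
          exact absurd hc h1α
      · by_cases huz : u = z
        · subst huz
          by_cases hvw : v = w
          · subst hvw
            refine Or.inr (Or.inl ⟨?_, rfl, rfl⟩)
            by_contra hab
            have h2 : (α - (1-β)) • f u = (α - (1-β)) • f v := by
              linear_combination (norm := module) h
            exact huv (cancel (sub_ne_zero.mpr hab) h2)
          · have h3 : (α - (1-β)) • f u + (1-α) • f v + (-β) • f w = 0 := by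
              linear_combination (norm := module) h
            obtain ⟨-, hc, -⟩ := li3 hf huv huw hvw h3
            exact absurd hc h1α
        · by_cases hvw : v = w
          · subst hvw
            have hvz : v ≠ z := hwz
            have h3 : α • f u + (1 - α - β) • f v + (-(1-β)) • f z = 0 := by
              linear_combination (norm := module) h
            exact absurd (li3 hf huv huz hvz h3).1 hα0
          · by_cases hvz : v = z
            · subst hvz
              have h3 : α • f u + ((1-α) - (1-β)) • f v + (-β) • f w = 0 := by
                linear_combination (norm := module) h
              exact absurd (li3 hf huv huw hvw h3).1 hα0
            · have h3 : α • f u + (1-α) • f v + (-β) • f w + (-(1-β)) • f z = 0 := by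
                linear_combination (norm := module) h
              exact absurd (li4 hf huv huw huz hvw hvz hwz h3).1 hα0

lemma bin_same {l a b a' b' : ℝ} (h0 : 0 < l) (h1 : l < 1) (hh : l ≠ 1/2)
    (ha : a = 0 ∨ a = 1) (hb : b = 0 ∨ b = 1) (ha' : a' = 0 ∨ a' = 1) (hb' : b' = 0 ∨ b' = 1)
    (h : l * a' + (1 - l) * b' = l * a + (1 - l) * b) : a' = a ∧ b' = b := by
  have hh' : l < 1/2 ∨ 1/2 < l := lt_or_gt_of_ne hh
  rcases ha with rfl | rfl <;> rcases hb with rfl | rfl <;>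
    rcases ha' with rfl | rfl <;> rcases hb' with rfl | rfl <;>
    constructor <;> first
      | rfl
      | (rcases hh' with h2 | h2 <;> nlinarith)

lemma bin_diff {l u a b a' b' : ℝ} (hl0 : 0 < l) (hl1 : l < 1) (hu0 : 0 < u) (hu1 : u < 1)
    (ha : a = 0 ∨ a = 1) (hb : b = 0 ∨ b = 1) (ha' : a' = 0 ∨ a' = 1) (hb' : b' = 0 ∨ b' = 1)
    (hab : a ≠ b) (h : u * a' + (1 - u) * b' = l * a + (1 - l) * b) : u = l ∨ u = 1 - l := by
  rcases ha with rfl | rfl <;> rcases hb with rfl | rfl <;>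
    rcases ha' with rfl | rfl <;> rcases hb' with rfl | rfl <;>
    first
      | (exact absurd rfl hab)
      | (left; linarith)
      | (right; linarith)
      | (exfalso; nlinarith)

lemma edge_all {n : ℕ} {l : ℝ} (h0 : 0 < l) (h1 : l < 1) (hh : l ≠ 1/2)
    {eA eB eA' eB' : Matrix (Fin n) (Fin n) ℝ}
    (hA : IsBinary eA) (hB : IsBinary eB) (hA' : IsBinary eA') (hB' : IsBinary eB')
    (h : l • eA' + (1 - l) • eB' = l • eA + (1 - l) • eB) : eA' = eA ∧ eB' = eB := by
  have key : ∀ i j, eA' i j = eA i j ∧ eB' i j = eB i j := by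
    intro i j
    have he := congrFun (congrFun h i) j
    simp only [Matrix.add_apply, Matrix.smul_apply, smul_eq_mul] at he
    exact bin_same h0 h1 hh (hA i j) (hB i j) (hA' i j) (hB' i j) he
  exact ⟨by ext i j; exact (key i j).1, by ext i j; exact (key i j).2⟩

/-- Theorem 1 (Intrusion-Freeness, under the condition of Lemma 3): the two
original node-featured graphs, given by edge matrices and coefficient matrices
over the basis of rows of `B`, and the mixing ratio λ are uniquely recovered,
up to the swap λ ↔ 1-λ, from the mixed graph. -/
theorem stmt_16 {n m d : ℕ} (B : Matrix (Fin m) (Fin d) ℝ)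
    (hB : LinearIndependent ℝ (fun i : Fin m => (B i : Fin d → ℝ)))
    (𝒯 : Set (Matrix (Fin n) (Fin m) ℝ))
    (h𝒯 : LinearIndependent ℝ (fun T : 𝒯 => (T : Matrix (Fin n) (Fin m) ℝ)))
    {lam : ℝ} (h0 : 0 < lam) (h1 : lam < 1) (hhalf : lam ≠ 1 / 2)
    {mu : ℝ} (hmu0 : 0 < mu) (hmu1 : mu < 1)
    (eA eB eA' eB' : Matrix (Fin n) (Fin n) ℝ)
    (heA : IsBinary eA) (heB : IsBinary eB) (heA' : IsBinary eA') (heB' : IsBinary eB')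
    {TA TB TA' TB' : Matrix (Fin n) (Fin m) ℝ}
    (hTA : TA ∈ 𝒯) (hTB : TB ∈ 𝒯) (hTA' : TA' ∈ 𝒯) (hTB' : TB' ∈ 𝒯)
    (hne : (eA, TA) ≠ (eB, TB))
    (hedge : mu • eA' + (1 - mu) • eB' = lam • eA + (1 - lam) • eB)
    (hfeat : mu • (TA' * B) + (1 - mu) • (TB' * B) =
             lam • (TA * B) + (1 - lam) • (TB * B)) :
    (mu = lam ∧ eA' = eA ∧ eB' = eB ∧ TA' = TA ∧ TB' = TB) ∨
    (mu = 1 - lam ∧ eA' = eB ∧ eB' = eA ∧ TA' = TB ∧ TB' = TA) := by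
  -- Step 1: cancel B from the feature equation.
  have hT : mu • TA' + (1 - mu) • TB' = lam • TA + (1 - lam) • TB := by
    set X := mu • TA' + (1 - mu) • TB' - (lam • TA + (1 - lam) • TB) with hX
    have hXB : X * B = 0 := by
      rw [hX, Matrix.sub_mul, Matrix.add_mul, Matrix.add_mul, Matrix.smul_mul,
        Matrix.smul_mul, Matrix.smul_mul, Matrix.smul_mul, hfeat, sub_self]
    have hX0 : X = 0 := by
      ext i k
      have hsum : ∑ kk, X i kk • B kk = 0 := by
        funext j
        have := congrFun (congrFun hXB i) j
        simpa [Matrix.mul_apply, Finset.sum_apply] using this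
      exact Fintype.linearIndependent_iff.mp hB (fun kk => X i kk) hsum k
    exact sub_eq_zero.mp hX0
  -- Step 2: apply the matching lemma over the linearly independent family 𝒯.
  have hT' : mu • ((⟨TA', hTA'⟩ : 𝒯) : Matrix (Fin n) (Fin m) ℝ) +
      (1 - mu) • ((⟨TB', hTB'⟩ : 𝒯) : Matrix (Fin n) (Fin m) ℝ) =
      lam • ((⟨TA, hTA⟩ : 𝒯) : Matrix (Fin n) (Fin m) ℝ) +
      (1 - lam) • ((⟨TB, hTB⟩ : 𝒯) : Matrix (Fin n) (Fin m) ℝ) := hT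
  rcases pair_eq h𝒯 (ne_of_gt hmu0) (ne_of_lt hmu1) (ne_of_gt h0) (ne_of_lt h1) hT' with
    ⟨hml, hUW, hVZ⟩ | ⟨hml, hUZ, hVW⟩ | ⟨hUV, hWZ, hUW⟩
  · -- mu = lam, TA' = TA, TB' = TB
    have hT1 : TA' = TA := congrArg Subtype.val hUW
    have hT2 : TB' = TB := congrArg Subtype.val hVZ
    rw [hml] at hedge
    obtain ⟨hE1, hE2⟩ := edge_all h0 h1 hhalf heA heB heA' heB' hedge
    exact Or.inl ⟨hml, hE1, hE2, hT1, hT2⟩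
  · -- mu = 1 - lam, TA' = TB, TB' = TA
    have hT1 : TA' = TB := congrArg Subtype.val hUZ
    have hT2 : TB' = TA := congrArg Subtype.val hVW
    have hedge' : lam • eB' + (1 - lam) • eA' = lam • eA + (1 - lam) • eB := by
      rw [← hedge, hml]; module
    obtain ⟨hE1, hE2⟩ := edge_all h0 h1 hhalf heA heB heB' heA' hedge'
    exact Or.inr ⟨hml, hE2, hE1, hT1, hT2⟩
  · -- degenerate: TA' = TB' and TA = TB and TA' = TA
    have hT1 : TA' = TB' := congrArg Subtype.val hUV
    have hT2 : TA = TB := congrArg Subtype.val hWZ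
    have hT3 : TA' = TA := congrArg Subtype.val hUW
    have heAB : eA ≠ eB := by
      intro hE
      exact hne (by rw [hE, hT2])
    have hex : ∃ i j, eA i j ≠ eB i j := by
      by_contra hc
      push_neg at hc
      exact heAB (by ext i j; exact hc i j)
    obtain ⟨i, j, hij⟩ := hex
    have he := congrFun (congrFun hedge i) j
    simp only [Matrix.add_apply, Matrix.smul_apply, smul_eq_mul] at he
    rcases bin_diff h0 h1 hmu0 hmu1 (heA i j) (heB i j) (heA' i j) (heB' i j) hij he with
      hml | hml
    · rw [hml] at hedge
      obtain ⟨hE1, hE2⟩ := edge_all h0 h1 hhalf heA heB heA' heB' hedge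
      exact Or.inl ⟨hml, hE1, hE2, hT3, by rw [← hT1, hT3, hT2]⟩
    · have hedge' : lam • eB' + (1 - lam) • eA' = lam • eA + (1 - lam) • eB := by
        rw [← hedge, hml]; module
      obtain ⟨hE1, hE2⟩ := edge_all h0 h1 hhalf heA heB heB' heA' hedge'
      exact Or.inr ⟨hml, hE2, hE1, by rw [hT3, hT2], by rw [← hT1, hT3]⟩
end
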